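/- arXiv:1809.09727 — 8 statements merged into one kernel-verified Lean document; each statement's English description precedes it below -/
import Mathlib

section
/- Let (S, σ, τ) be a frame. Then the ideal tS₁ of S₀ is contained in the Jacobson radical of S₀. -/
/-!
Write `σ₀` for `σ` viewed as an endomorphism of `S₀`. For `a ∈ tS₁` we have `σ₀ a ∈ σ(t) σ(S₁) ⊆ p S₀`,
while `σ₀ s ≡ s ^ p` mod `p` for every `s ∈ S₀`. Hence `(1 + a) ^ p ≡ σ₀ (1 + a) ≡ 1` mod `p`, and since
`p` lies in the Jacobson radical of `S₀`, the power `(1 + a) ^ p`, and with it `1 + a`, is a unit.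
-/

/-- A (higher) frame. -/
structure Frame (p : ℕ) (S : Type) [CommRing S] where
  grade : ℤ → AddSubgroup S
  one_mem : (1 : S) ∈ grade 0
  mul_mem : ∀ {m n : ℤ} {a b : S}, a ∈ grade m → b ∈ grade n → a * b ∈ grade (m + n)
  isInternal : DirectSum.IsInternal grade
  σ : S →+* S
  τ : S →+* S
  σ_mem : ∀ s, σ s ∈ grade 0
  τ_mem : ∀ s, τ s ∈ grade 0
  τ_id : ∀ s ∈ grade 0, τ s = s
  τ_bij : ∀ n : ℕ, 1 ≤ n → Set.BijOn τ (grade (-(n : ℤ))) (grade 0)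
  t : S
  t_mem : t ∈ grade (-1)
  τ_t : τ t = 1
  σ_frob : ∀ s ∈ grade 0, ∃ c ∈ grade 0, σ s = s ^ p + (p : S) * c
  σ_t : σ t = (p : S)
  p_jac : ∀ x ∈ grade 0, ∃ y ∈ grade 0, (1 - (p : S) * x) * y = 1

variable {p : ℕ} {S : Type} [CommRing S]

/-- The degree zero subring S₀ of a frame. -/
def Frame.S0 (F : Frame p S) : Subring S where
  carrier := F.grade 0
  mul_mem' {a b} ha hb := by simpa using F.mul_mem ha hb
  one_mem' := F.one_mem
  add_mem' {a b} ha hb := add_mem ha hb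
  zero_mem' := zero_mem _
  neg_mem' {a} ha := neg_mem ha

/-- The ideal tS₁ ⊆ S₀. -/
def Frame.tS1 (F : Frame p S) : Ideal F.S0 where
  carrier := {a | ∃ x ∈ F.grade 1, (a : S) = F.t * x}
  add_mem' := by
    rintro a b ⟨x, hx, hax⟩ ⟨y, hy, hby⟩
    exact ⟨x + y, add_mem hx hy, by push_cast [hax, hby]; ring⟩
  zero_mem' := ⟨0, zero_mem _, by simp⟩
  smul_mem' := by
    rintro c a ⟨x, hx, hax⟩
    refine ⟨(c : S) * x, by simpa using F.mul_mem c.2 hx, ?_⟩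
    show ((c * a : F.S0) : S) = _
    push_cast [hax]; ring

/-- The ring R = S₀/tS₁ of a frame. -/
abbrev Frame.R (F : Frame p S) : Type := F.S0 ⧸ F.tS1

/-- The kernel of ρ : S → R, the graded ideal with K₀ = tS₁ and Kₙ = Sₙ for n ≠ 0. -/
def Frame.kerRho (F : Frame p S) : Ideal S :=
  Ideal.span ({s : S | ∃ x ∈ F.grade 1, s = F.t * x} ∪ ⋃ (n : ℤ) (_ : n ≠ 0), (F.grade n : Set S))


theorem isUnit_of_pow_sub_one_mem_jacobson_bot {A : Type*} [CommRing A] {s : A} {n : ℕ}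
    (hn : n ≠ 0) (h : s ^ n - 1 ∈ (⊥ : Ideal A).jacobson) : IsUnit s :=
  (isUnit_pow_iff hn).mp (Ideal.isUnit_of_sub_one_mem_jacobson_bot _ h)

namespace Frame

variable (F : Frame p S)

def σ₀ : F.S0 →+* F.S0 :=
  (F.σ.codRestrict F.S0 F.σ_mem).comp F.S0.subtype

@[simp]
theorem coe_σ₀ (s : F.S0) : (F.σ₀ s : S) = F.σ s := rfl

theorem natCast_mem_jacobson_bot : (p : F.S0) ∈ (⊥ : Ideal F.S0).jacobson := by
  rw [Ideal.mem_jacobson_bot]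
  intro x
  obtain ⟨y, hy, hxy⟩ := F.p_jac (-x) (neg_mem x.2)
  exact IsUnit.of_mul_eq_one ⟨y, hy⟩ (Subtype.ext (by push_cast; linear_combination hxy))

theorem σ₀_sub_pow_mem_span (s : F.S0) : F.σ₀ s - s ^ p ∈ Ideal.span {(p : F.S0)} := by
  obtain ⟨c, hc, hfrob⟩ := F.σ_frob s s.2
  refine Ideal.mem_span_singleton'.2 ⟨⟨c, hc⟩, Subtype.ext ?_⟩
  push_cast [coe_σ₀, hfrob]
  ring

theorem σ₀_mem_span_of_mem_tS1 {a : F.S0} (ha : a ∈ F.tS1) :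
    F.σ₀ a ∈ Ideal.span {(p : F.S0)} := by
  obtain ⟨x, hx, hax⟩ := ha
  refine Ideal.mem_span_singleton.2 ⟨⟨F.σ x, F.σ_mem x⟩, Subtype.ext ?_⟩
  simp [hax, F.σ_t]

theorem isUnit_one_add_of_mem_tS1 (hp : p ≠ 0) {a : F.S0} (ha : a ∈ F.tS1) : IsUnit (1 + a) := by
  have hjac : Ideal.span {(p : F.S0)} ≤ (⊥ : Ideal F.S0).jacobson :=
    (Ideal.span_singleton_le_iff_mem _).2 F.natCast_mem_jacobson_bot
  have hpow : (1 + a) ^ p - 1 = F.σ₀ a - (F.σ₀ (1 + a) - (1 + a) ^ p) := by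
    rw [map_add, map_one]
    ring
  refine isUnit_of_pow_sub_one_mem_jacobson_bot hp (hjac ?_)
  rw [hpow]
  exact sub_mem (F.σ₀_mem_span_of_mem_tS1 ha) (F.σ₀_sub_pow_mem_span _)

end Frame

/-- For a frame `(S, σ, τ)`, the ideal `tS₁` of `S₀` is contained in the
Jacobson radical of `S₀`. -/
theorem frame_tS1_le_jacobson (p : ℕ) (hp : p.Prime) {S : Type} [CommRing S]
    (F : Frame p S) :
    F.tS1 ≤ (⊥ : Ideal F.S0).jacobson := by
  intro a ha
  rw [Ideal.mem_jacobson_bot]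
  intro b
  rw [add_comm]
  exact F.isUnit_one_add_of_mem_tS1 hp.ne_zero (F.tS1.mul_mem_right b ha)
end

section
/- Let (S, σ, τ) be a frame for R and let ρ : S → R be the ring homomorphism equal to the projection S₀ → R on S₀ and zero on Sₙ for all n ≠ 0. If M is a finitely generated graded S-module with M ⊗_{S,ρ} R = 0 (equivalently, M = K·M, where K = ker(ρ) is the graded ideal with K₀ = tS₁ and Kₙ = Sₙ for n ≠ 0), then M = 0. -/
variable {p : ℕ} {S : Type} [CommRing S]

open DirectSum

section proj

variable {ι G : Type*} [DecidableEq ι] [AddCommGroup G] (A : ι → AddSubgroup G)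
  (h : DirectSum.IsInternal A)

/-- The additive equivalence from the external direct sum. -/
noncomputable def gEquiv : (⨁ i, A i) ≃+ G :=
  AddEquiv.ofBijective (DirectSum.coeAddMonoidHom A) h

/-- Projection onto the `k`-th component. -/
noncomputable def gProj (k : ι) (g : G) : G := (((gEquiv A h).symm g) k : G)

lemma gProj_mem (k : ι) (g : G) : gProj A h k g ∈ A k := (((gEquiv A h).symm g) k).2

lemma gEquiv_of {j : ι} (x : A j) : gEquiv A h (DirectSum.of _ j x) = (x : G) :=
  DirectSum.coeAddMonoidHom_of A j x

lemma gProj_of_mem {j : ι} {g : G} (hg : g ∈ A j) (k : ι) :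
    gProj A h k g = if j = k then g else 0 := by
  have hsymm : (gEquiv A h).symm g = DirectSum.of _ j ⟨g, hg⟩ := by
    rw [AddEquiv.symm_apply_eq, gEquiv_of]
  rw [gProj, hsymm, DirectSum.of_apply]
  by_cases hjk : j = k
  · subst hjk; simp
  · simp [hjk]

/-- The projections form an additive monoid hom. -/
noncomputable def gProjHom (k : ι) : G →+ G :=
  AddMonoidHom.mk' (gProj A h k) (fun a b => by
    simp [gProj, map_add, DirectSum.add_apply])

@[simp] lemma gProjHom_apply (k : ι) (g : G) : gProjHom A h k g = gProj A h k g := rfl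

lemma sum_gProj [∀ (i : ι) (x : A i), Decidable (x ≠ 0)] (g : G) :
    ∑ k ∈ ((gEquiv A h).symm g).support, gProj A h k g = g := by
  conv_rhs => rw [← (gEquiv A h).apply_symm_apply g]
  conv_rhs => rw [← DirectSum.sum_support_of ((gEquiv A h).symm g)]
  rw [map_sum]
  exact Finset.sum_congr rfl fun k _ => (gEquiv_of A h _).symm

lemma gProj_eq_zero_of_notMem_support [∀ (i : ι) (x : A i), Decidable (x ≠ 0)] {g : G} {k : ι}
    (hk : k ∉ ((gEquiv A h).symm g).support) : gProj A h k g = 0 := by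
  rw [gProj, DFinsupp.notMem_support_iff.mp hk, ZeroMemClass.coe_zero]

end proj

section projsmul

variable {S : Type} [CommRing S] {M : Type} [AddCommGroup M] [Module S M]

/-- The projection of `r • x` for homogeneous `x`. -/
lemma gProj_smul_homog (𝒜 : ℤ → AddSubgroup S) (hS : DirectSum.IsInternal 𝒜)
    (ℳ : ℤ → AddSubgroup M) (hM : DirectSum.IsInternal ℳ)
    (hsmul : ∀ {m n : ℤ} {a : S} {x : M}, a ∈ 𝒜 m → x ∈ ℳ n → a • x ∈ ℳ (m + n))
    (r : S) {n : ℤ} (k : ℤ) {x : M} (hx : x ∈ ℳ n) :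
    gProj ℳ hM k (r • x) = gProj 𝒜 hS (k - n) r • x := by
  classical
  conv_lhs => rw [← sum_gProj 𝒜 hS r]
  rw [Finset.sum_smul, ← gProjHom_apply, map_sum]
  have step : ∀ m ∈ ((gEquiv 𝒜 hS).symm r).support,
      gProjHom ℳ hM k (gProj 𝒜 hS m r • x)
        = if m = k - n then gProj 𝒜 hS m r • x else 0 := by
    intro m _
    rw [gProjHom_apply, gProj_of_mem ℳ hM (hsmul (gProj_mem 𝒜 hS m r) hx) k]
    congr 1
    exact propext (by omega)
  rw [Finset.sum_congr rfl step, Finset.sum_ite_eq' _ (k - n)]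
  by_cases hmem : k - n ∈ ((gEquiv 𝒜 hS).symm r).support
  · rw [if_pos hmem]
  · rw [if_neg hmem, gProj_eq_zero_of_notMem_support 𝒜 hS hmem, zero_smul]

end projsmul


/-- graded Nakayama: if `M` is a finitely generated graded `S`-module over a
frame `(S, σ, τ)` with `M = K·M`, where `K = ker ρ` is the graded ideal with `K₀ = tS₁` and
`Kₙ = Sₙ` for `n ≠ 0`, then `M = 0`. -/
theorem frame_graded_nakayama (p : ℕ) (hp : p.Prime) {S : Type} [CommRing S]
    (F : Frame p S)
    {M : Type} [AddCommGroup M] [Module S M]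
    (ℳ : ℤ → AddSubgroup M)
    (hsmul : ∀ {m n : ℤ} {a : S} {x : M}, a ∈ F.grade m → x ∈ ℳ n → a • x ∈ ℳ (m + n))
    (hinternal : DirectSum.IsInternal ℳ)
    (hfin : Module.Finite S M)
    (hKM : F.kerRho • (⊤ : Submodule S M) = ⊤) :
    Subsingleton M := by
  classical
  -- Step 1: the determinant-trick Nakayama element
  obtain ⟨r', hr'K, hr'0⟩ := Submodule.exists_sub_one_mem_and_smul_eq_zero_of_fg_of_le_smul
    F.kerRho (⊤ : Submodule S M) (Module.finite_def.mp hfin) (le_of_eq hKM.symm)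
  set r : S := 1 - r' with hrdef
  have hrK : r ∈ F.kerRho := by
    have := F.kerRho.neg_mem hr'K
    simpa [hrdef, neg_sub] using this
  have hr : ∀ m : M, r • m = m := by
    intro m
    have h0 := hr'0 m trivial
    rw [hrdef, sub_smul, one_smul, h0, sub_zero]
  -- powers of t
  have tpow : ∀ n : ℕ, F.t ^ n ∈ F.grade (-(n : ℤ)) := by
    intro n
    induction n with
    | zero => simpa using F.one_mem
    | succ k ih =>
      have h1 := F.mul_mem ih F.t_mem
      rw [pow_succ]
      convert h1 using 2
      push_cast; ring
  -- elements of negative degree are multiples of powers of t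
  have neg_eq : ∀ (n : ℕ), 1 ≤ n → ∀ s ∈ F.grade (-(n : ℤ)), s = F.t ^ n * F.τ s := by
    intro n hn s hs
    have h1 : F.t ^ n * F.τ s ∈ F.grade (-(n : ℤ)) := by
      have := F.mul_mem (tpow n) (F.τ_mem s)
      simpa using this
    have h2 : F.τ (F.t ^ n * F.τ s) = F.τ s := by
      rw [map_mul, map_pow, F.τ_t, one_pow, one_mul, F.τ_id _ (F.τ_mem s)]
    exact (F.τ_bij n hn).injOn hs h1 h2.symm
  -- the set tS₁
  set InA : S → Prop := fun a => ∃ x ∈ F.grade 1, a = F.t * x with hInA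
  have hA_zero : InA 0 := ⟨0, (F.grade 1).zero_mem, by ring⟩
  have hA_add : ∀ {a b : S}, InA a → InA b → InA (a + b) := by
    rintro a b ⟨x, hx, rfl⟩ ⟨y, hy, rfl⟩
    exact ⟨x + y, add_mem hx hy, by ring⟩
  -- products of opposite nonzero degrees land in tS₁
  have hA_mul : ∀ (n : ℤ), n ≠ 0 → ∀ g ∈ F.grade n, ∀ c ∈ F.grade (-n), InA (c * g) := by
    intro n hn g hg c hc
    rcases lt_or_gt_of_ne hn with hneg | hpos
    · -- n < 0 : g is a multiple of t^m, m = -n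
      set m : ℕ := (-n).toNat with hm
      have hm1 : 1 ≤ m := by omega
      have hmn : -(m : ℤ) = n := by omega
      have hg' : g ∈ F.grade (-(m : ℤ)) := by rwa [hmn]
      have hgeq := neg_eq m hm1 g hg'
      refine ⟨F.t ^ (m - 1) * F.τ g * c, ?_, ?_⟩
      · have h1 := F.mul_mem (F.mul_mem (tpow (m - 1)) (F.τ_mem g)) hc
        convert h1 using 2
        omega
      · have ht : F.t ^ m = F.t * F.t ^ (m - 1) := by
          conv_lhs => rw [show m = 1 + (m - 1) by omega]
          rw [pow_add, pow_one]
        conv_lhs => rw [hgeq, ht]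
        ring
    · -- n > 0 : c is a multiple of t^m, m = n
      set m : ℕ := n.toNat with hm
      have hm1 : 1 ≤ m := by omega
      have hmn : -(m : ℤ) = -n := by omega
      have hc' : c ∈ F.grade (-(m : ℤ)) := by rwa [hmn]
      have hceq := neg_eq m hm1 c hc'
      refine ⟨F.t ^ (m - 1) * F.τ c * g, ?_, ?_⟩
      · have h1 := F.mul_mem (F.mul_mem (tpow (m - 1)) (F.τ_mem c)) hg
        convert h1 using 2
        omega
      · have ht : F.t ^ m = F.t * F.t ^ (m - 1) := by
          conv_lhs => rw [show m = 1 + (m - 1) by omega]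
          rw [pow_add, pow_one]
        conv_lhs => rw [hceq, ht]
        ring
  -- S is a graded module over itself
  have hsmulS : ∀ {m n : ℤ} {a : S} {x : S}, a ∈ F.grade m → x ∈ F.grade n →
      a • x ∈ F.grade (m + n) := by
    intro m n a x ha hx
    rw [smul_eq_mul]
    exact F.mul_mem ha hx
  -- the degree-0 component of any element of kerRho lies in tS₁
  have key : ∀ s ∈ F.kerRho, ∀ c : S, InA (gProj F.grade F.isInternal 0 (c * s)) := by
    intro s hs
    induction hs using Submodule.span_induction with
    | mem x hxT =>
      intro c
      rcases hxT with hx1 | hx2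
      · -- x = t * x₁ has degree 0
        obtain ⟨x₁, hx₁, rfl⟩ := hx1
        have hx0 : F.t * x₁ ∈ F.grade 0 := by
          have := F.mul_mem F.t_mem hx₁
          simpa using this
        rw [← smul_eq_mul,
          gProj_smul_homog F.grade F.isInternal F.grade F.isInternal hsmulS c 0 hx0,
          sub_self, smul_eq_mul]
        exact ⟨gProj F.grade F.isInternal 0 c * x₁,
          by simpa using F.mul_mem (gProj_mem F.grade F.isInternal 0 c) hx₁,
          by ring⟩
      · -- x has nonzero degree n
        simp only [Set.mem_iUnion] at hx2
        obtain ⟨n, hn, hxn⟩ := hx2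
        rw [← smul_eq_mul,
          gProj_smul_homog F.grade F.isInternal F.grade F.isInternal hsmulS c 0 hxn,
          smul_eq_mul, zero_sub]
        exact hA_mul n hn x hxn _ (gProj_mem F.grade F.isInternal (-n) c)
    | zero =>
      intro c
      rw [mul_zero, ← gProjHom_apply, map_zero]
      exact hA_zero
    | add x y hx hy ihx ihy =>
      intro c
      rw [mul_add, ← gProjHom_apply, map_add, gProjHom_apply, gProjHom_apply]
      exact hA_add (ihx c) (ihy c)
    | smul a x hx ih =>
      intro c
      rw [smul_eq_mul, show c * (a * x) = (c * a) * x by ring]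
      exact ih (c * a)
  -- the degree-0 component r₀ of r, and its properties
  have hInr : InA (gProj F.grade F.isInternal 0 r) := by
    have h := key r hrK 1
    rwa [one_mul] at h
  obtain ⟨x₁, hx₁, hr₀eq⟩ := hInr
  set r₀ := gProj F.grade F.isInternal 0 r with hr₀def
  have hr₀mem : r₀ ∈ F.grade 0 := gProj_mem F.grade F.isInternal 0 r
  obtain ⟨c, hc, hfrob⟩ := F.σ_frob r₀ hr₀mem
  have hσr₀ : F.σ r₀ = (p : S) * F.σ x₁ := by rw [hr₀eq, map_mul, F.σ_t]
  have hpow : r₀ ^ p = (p : S) * (F.σ x₁ - c) := by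
    rw [hσr₀] at hfrob
    linear_combination -hfrob
  obtain ⟨y, hy, hy1⟩ := F.p_jac (F.σ x₁ - c) (sub_mem (F.σ_mem x₁) hc)
  set u := (∑ i ∈ Finset.range p, r₀ ^ i) * y with hu
  have hunit : u * (1 - r₀) = 1 := by
    have hg := geom_sum_mul r₀ p
    calc u * (1 - r₀) = -((∑ i ∈ Finset.range p, r₀ ^ i) * (r₀ - 1)) * y := by
          rw [hu]; ring
      _ = -(r₀ ^ p - 1) * y := by rw [hg]
      _ = (1 - (p : S) * (F.σ x₁ - c)) * y := by rw [hpow]; ring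
      _ = 1 := hy1
  -- every homogeneous element of M vanishes
  have hhomog : ∀ (n : ℤ) (x : M), x ∈ ℳ n → x = 0 := by
    intro n x hx
    have h1 : gProj ℳ hinternal n x = x := by
      rw [gProj_of_mem ℳ hinternal hx n, if_pos rfl]
    have h2 : gProj ℳ hinternal n (r • x) = r₀ • x := by
      rw [gProj_smul_homog F.grade F.isInternal ℳ hinternal hsmul r n hx, sub_self]
    have h3 : x = r₀ • x := by rw [← h2, hr x, h1]
    have h4 : (1 - r₀) • x = 0 := by rw [sub_smul, one_smul, ← h3, sub_self]
    calc x = (u * (1 - r₀)) • x := by rw [hunit, one_smul]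
      _ = u • ((1 - r₀) • x) := by rw [mul_smul]
      _ = 0 := by rw [h4, smul_zero]
  have hall : ∀ x : M, x = 0 := by
    intro x
    rw [← sum_gProj ℳ hinternal x]
    exact Finset.sum_eq_zero fun k _ => hhomog k _ (gProj_mem ℳ hinternal k x)
  exact ⟨fun a b => by rw [hall a, hall b]⟩
end

section
/- Let (S, σ, τ) be a frame for R, let ρ : S → R be the ring homomorphism equal to the projection S₀ → R on S₀ and zero on Sₙ for n ≠ 0, let M and N be finitely generated graded S-modules with M projective as an S-module, and let f : N → M be a degree-preserving S-linear map. Then f is bijective if and only if its reduction f̄ : N ⊗_{S,ρ} R → M ⊗_{S,ρ} R is bijective. -/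
variable {p : ℕ} {S : Type} [CommRing S]

/-!
Graded Nakayama: if `1 - k₀` is a unit for every `k` in an ideal `I` of a graded ring (`k₀` the
degree-zero component), then a finitely generated homogeneous submodule `V` with
`V ≤ W ⊔ I • V`, `W` homogeneous, lies in `W`. For a homogeneous generator `x` of degree `d`,
writing `x = w + k • x + u` with `k ∈ I` and `u` in the span of the other generators and taking
degree-`d` components gives `(1 - k₀) • x = w_d + u_d`, so `x` can be dropped.

For a frame, the kernel `K` of `ρ : S → R` qualifies: `K₀ = tS₁`, and for `y = t x ∈ tS₁` the
relation `σ(y) = p σ(x)` together with `σ(y) ≡ y ^ p mod p` gives `y ^ p ∈ pS₀`, so `1 - y ^ p`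
is a unit since `p` is in the Jacobson radical of `S₀`, and `1 - y` divides it.
Then `f̄` surjective gives `range f ⊔ K M = M`, so `f` is surjective; `M` projective splits `f`,
so `ker f` is finitely generated with `ker f ∩ K N = K ker f`, and `f̄` injective gives
`ker f ≤ K ker f`, so `ker f = 0`.
-/

open DirectSum Pointwise Submodule

section Decomposition

variable {ι A M N σA σM σN : Type*} [DecidableEq ι] [Semiring A]
  [AddCommMonoid M] [Module A M] [AddCommMonoid N] [Module A N]
  [SetLike σM M] [AddSubmonoidClass σM M] (ℳ : ι → σM) [Decomposition ℳ]
  [SetLike σN N] [AddSubmonoidClass σN N] (𝒩 : ι → σN) [Decomposition 𝒩]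

theorem LinearMap.coe_decompose_apply_of_forall_mem (f : N →ₗ[A] M)
    (hf : ∀ i, ∀ x ∈ 𝒩 i, f x ∈ ℳ i) (x : N) (n : ι) :
    (decompose ℳ (f x) n : M) = f (decompose 𝒩 x n) := by
  induction x using Decomposition.inductionOn 𝒩 with
  | zero => simp
  | @homogeneous i x =>
    rw [decompose_coe, coe_of_apply, decompose_of_mem ℳ (hf i x x.2), coe_of_apply]
    split_ifs <;> simp
  | add x x' hx hx' => simp [hx, hx']

variable {ℳ 𝒩}

theorem LinearMap.isHomogeneous_range {f : N →ₗ[A] M} (hf : ∀ i, ∀ x ∈ 𝒩 i, f x ∈ ℳ i) :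
    (LinearMap.range f).IsHomogeneous ℳ := by
  rintro n _ ⟨x, rfl⟩
  rw [f.coe_decompose_apply_of_forall_mem ℳ 𝒩 hf]
  exact LinearMap.mem_range_self f _

theorem LinearMap.isHomogeneous_ker {f : N →ₗ[A] M} (hf : ∀ i, ∀ x ∈ 𝒩 i, f x ∈ ℳ i) :
    (LinearMap.ker f).IsHomogeneous 𝒩 := by
  intro n x hx
  rw [LinearMap.mem_ker, ← f.coe_decompose_apply_of_forall_mem ℳ 𝒩 hf, LinearMap.mem_ker.mp hx]
  simp

theorem Submodule.IsHomogeneous.exists_finset_span_eq {V : Submodule A M}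
    (hV : V.IsHomogeneous ℳ) (hfg : V.FG) :
    ∃ s : Finset M, (∀ x ∈ s, SetLike.IsHomogeneousElem ℳ x) ∧ span A s = V := by
  classical
  obtain ⟨T, rfl⟩ := hfg
  refine ⟨T.biUnion fun x => (decompose ℳ x).support.image fun i => (decompose ℳ x i : M),
    ?_, le_antisymm (span_le.mpr ?_) (span_le.mpr fun x hx => ?_)⟩
  · simp only [Finset.mem_biUnion, Finset.mem_image]
    rintro _ ⟨x, -, i, -, rfl⟩
    exact ⟨i, (decompose ℳ x i).2⟩
  · intro y hy
    simp only [Finset.mem_coe, Finset.mem_biUnion, Finset.mem_image] at hy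
    obtain ⟨x, hx, i, -, rfl⟩ := hy
    exact hV i (subset_span hx)
  · rw [← sum_support_decompose ℳ x]
    refine sum_mem fun i hi => subset_span ?_
    simp only [Finset.mem_coe, Finset.mem_biUnion, Finset.mem_image]
    exact ⟨x, hx, i, hi, rfl⟩

variable [AddGroup ι] [SetLike σA A] [AddSubmonoidClass σA A] (𝒜 : ι → σA) [Decomposition 𝒜]

theorem DirectSum.coe_decompose_smul_of_right_mem [SetLike.GradedSMul 𝒜 ℳ] (a : A) {y : M}
    {j : ι} (hy : y ∈ ℳ j) (n : ι) :
    (decompose ℳ (a • y) n : M) = (decompose 𝒜 a (n - j) : A) • y := by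
  induction a using Decomposition.inductionOn 𝒜 with
  | zero => simp
  | @homogeneous i a =>
    rw [decompose_coe, coe_of_apply,
      decompose_of_mem ℳ (SetLike.GradedSMul.smul_mem a.2 hy), coe_of_apply]
    by_cases h : i = n - j
    · simp [h]
    · simp [h, (eq_sub_iff_add_eq.not.mp h)]
  | add a a' ha ha' => simp [add_smul, ha, ha']

theorem Submodule.isHomogeneous_span [SetLike.GradedSMul 𝒜 ℳ] {s : Set M}
    (hs : ∀ x ∈ s, SetLike.IsHomogeneousElem ℳ x) : (span A s).IsHomogeneous ℳ := by
  intro n x hx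
  obtain ⟨k, c, g, rfl⟩ := mem_span_set'.mp hx
  rw [decompose_sum, DFinsupp.finsetSum_apply, AddSubmonoidClass.coe_finsetSum]
  refine sum_mem fun i _ => ?_
  obtain ⟨j, hj⟩ := hs _ (g i).2
  rw [coe_decompose_smul_of_right_mem 𝒜 _ hj]
  exact smul_mem _ _ (subset_span (g i).2)

end Decomposition

section GradedNakayama

variable {ι A M σA σM : Type*} [AddGroup ι] [DecidableEq ι] [CommRing A]
  [AddCommGroup M] [Module A M]
  [SetLike σA A] [AddSubmonoidClass σA A] (𝒜 : ι → σA) [Decomposition 𝒜]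
  [SetLike σM M] [AddSubmonoidClass σM M] {ℳ : ι → σM} [Decomposition ℳ]
  [SetLike.GradedSMul 𝒜 ℳ] {I : Ideal A}

theorem Submodule.mem_sup_span_of_mem_sup_smul_span_insert
    (hI : ∀ k ∈ I, IsUnit (1 - (decompose 𝒜 k 0 : A)))
    {W : Submodule A M} (hW : W.IsHomogeneous ℳ) {s : Set M}
    (hs : ∀ y ∈ s, SetLike.IsHomogeneousElem ℳ y) {x : M} {d : ι} (hx : x ∈ ℳ d)
    (h : x ∈ W ⊔ I • span A (insert x s)) : x ∈ W ⊔ span A s := by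
  rw [span_insert, smul_sup] at h
  obtain ⟨w, hw, v, hv, hwv⟩ := mem_sup.mp h
  obtain ⟨_, hkx, u, hu, rfl⟩ := mem_sup.mp hv
  obtain ⟨k, hk, rfl⟩ := mem_smul_span_singleton.mp hkx
  have hcomp : (1 - (decompose 𝒜 k 0 : A)) • x = decompose ℳ w d + decompose ℳ u d := by
    have := congrArg (fun z => (decompose ℳ z d : M)) hwv
    simp only [decompose_add, DirectSum.add_apply, AddMemClass.coe_add,
      coe_decompose_smul_of_right_mem 𝒜 _ hx, decompose_of_mem_same ℳ hx] at this
    rw [sub_self] at this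
    rw [sub_smul, one_smul]
    nth_rewrite 1 [← this]
    abel
  rw [← smul_mem_iff_of_isUnit _ (hI k hk), hcomp]
  exact add_mem (mem_sup_left (hW d hw))
    (mem_sup_right (isHomogeneous_span 𝒜 hs d (smul_le_right hu)))

theorem Submodule.le_of_le_sup_smul_of_isHomogeneous
    (hI : ∀ k ∈ I, IsUnit (1 - (decompose 𝒜 k 0 : A)))
    {W V : Submodule A M} (hW : W.IsHomogeneous ℳ) (hV : V.IsHomogeneous ℳ) (hfg : V.FG)
    (hle : V ≤ W ⊔ I • V) : V ≤ W := by
  classical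
  obtain ⟨s, hs, rfl⟩ := hV.exists_finset_span_eq hfg
  suffices ∀ t ⊆ s, span A s ≤ W ⊔ span A t → span A s ≤ W from this s subset_rfl le_sup_right
  intro t
  induction t using Finset.induction_on with
  | empty => simp
  | insert x t _ ih =>
    intro hts hst
    rw [Finset.coe_insert] at hst
    have hxs : x ∈ s := hts (Finset.mem_insert_self x t)
    have hsmul : I • span A s ≤ W ⊔ I • span A (insert x ↑t) :=
      (smul_mono_right I hst).trans <| by
        rw [smul_sup]
        exact sup_le_sup_right smul_le_right _
    obtain ⟨d, hxd⟩ := hs x hxs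
    have hx : x ∈ W ⊔ span A t := by
      refine mem_sup_span_of_mem_sup_smul_span_insert 𝒜 hI hW
        (fun y hy => hs y (hts (Finset.mem_insert_of_mem hy))) hxd ?_
      exact sup_le le_sup_left hsmul (hle (subset_span hxs))
    refine ih ((Finset.subset_insert x t).trans hts) (hst.trans ?_)
    rw [span_insert]
    exact sup_le le_sup_left (sup_le (span_singleton_le_iff_mem _ _ |>.mpr hx) le_sup_right)

end GradedNakayama

section Quotient

variable {R M N : Type*} [CommRing R] [AddCommGroup M] [Module R M] [AddCommGroup N] [Module R N]
  {f : N →ₗ[R] M} {P : Submodule R N} {Q : Submodule R M}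

theorem Submodule.bijective_mapQ_of_bijective (hf : Function.Bijective f) (hPQ : P.map f = Q)
    (h : P ≤ Q.comap f) : Function.Bijective (P.mapQ Q f h) :=
  (Quotient.equiv P Q (LinearEquiv.ofBijective f hf) hPQ).bijective

theorem Submodule.range_sup_eq_top_of_surjective_mapQ {h : P ≤ Q.comap f}
    (hf : Function.Surjective (P.mapQ Q f h)) : LinearMap.range f ⊔ Q = ⊤ := by
  rw [sup_comm, ← comap_map_mkQ, ← range_mapQ _ _ _ h, LinearMap.range_eq_top.mpr hf, comap_top]

theorem Submodule.ker_le_of_injective_mapQ {h : P ≤ Q.comap f}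
    (hf : Function.Injective (P.mapQ Q f h)) : LinearMap.ker f ≤ P := by
  intro x hx
  rw [← Quotient.mk_eq_zero]
  apply hf
  rw [map_zero, mapQ_apply, LinearMap.mem_ker.mp hx, Quotient.mk_zero]

theorem LinearMap.ker_inf_smul_top_le_of_comp_eq_id {g : M →ₗ[R] N} (hfg : f ∘ₗ g = .id)
    (I : Ideal R) : LinearMap.ker f ⊓ I • ⊤ ≤ I • LinearMap.ker f := by
  rintro x ⟨hx, hxI⟩
  have hπx : (LinearMap.id - g ∘ₗ f : N →ₗ[R] N) x = x := by simp [LinearMap.mem_ker.mp hx]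
  rw [ker_eq_range_of_comp_eq_id hfg, range_eq_map, ← map_smul'', ← hπx]
  exact mem_map_of_mem hxI

end Quotient

namespace Frame

variable (F : Frame p S)

noncomputable instance : GradedRing F.grade where
  one_mem := F.one_mem
  mul_mem _ _ _ _ := F.mul_mem
  __ := F.isInternal.chooseDecomposition

/-- The ideal `F.tS1` of `S₀`, as a subgroup of `S`. -/
def tGradeOne : AddSubgroup S := (F.grade 1).map (AddMonoidHom.mulLeft F.t)

variable {F}

theorem mem_tGradeOne {y : S} : y ∈ F.tGradeOne ↔ ∃ x ∈ F.grade 1, F.t * x = y :=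
  AddSubgroup.mem_map

theorem t_pow_mem (n : ℕ) : F.t ^ n ∈ F.grade (-n) := by
  simpa using SetLike.pow_mem_graded n F.t_mem

theorem eq_t_pow_mul_τ {n : ℕ} (hn : 1 ≤ n) {s : S} (hs : s ∈ F.grade (-n)) :
    s = F.t ^ n * F.τ s := by
  refine (F.τ_bij n hn).injOn hs ?_ ?_
  · simpa using SetLike.mul_mem_graded (t_pow_mem n) (F.τ_mem s)
  · rw [map_mul, map_pow, F.τ_t, one_pow, one_mul, F.τ_id _ (F.τ_mem s)]

theorem mul_mem_tGradeOne_of_mem_zero {a y : S} (ha : a ∈ F.grade 0) (hy : y ∈ F.tGradeOne) :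
    a * y ∈ F.tGradeOne := by
  obtain ⟨x, hx, rfl⟩ := mem_tGradeOne.mp hy
  exact mem_tGradeOne.mpr ⟨a * x, by simpa using SetLike.mul_mem_graded ha hx, by ring⟩

theorem mul_mem_tGradeOne {j : ℤ} (hj : j ≠ 0) {a b : S} (ha : a ∈ F.grade j)
    (hb : b ∈ F.grade (-j)) : a * b ∈ F.tGradeOne := by
  suffices key : ∀ n : ℕ, ∀ {a b : S}, a ∈ F.grade (n + 1) → b ∈ F.grade (-(n + 1 : ℕ)) →
      a * b ∈ F.tGradeOne by
    obtain ⟨n, rfl | rfl⟩ := Int.eq_nat_or_neg j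
    all_goals obtain ⟨n, rfl⟩ := Nat.exists_eq_succ_of_ne_zero (by omega : n ≠ 0)
    · exact key n ha hb
    · rw [mul_comm]
      exact key n (by simpa using hb) ha
  intro n a b ha hb
  rw [eq_t_pow_mul_τ (by omega) hb, pow_succ]
  refine mem_tGradeOne.mpr ⟨F.t ^ n * F.τ b * a, ?_, by ring⟩
  have := SetLike.mul_mem_graded (SetLike.mul_mem_graded (t_pow_mem n) (F.τ_mem b)) ha
  rwa [show -(n : ℤ) + 0 + (n + 1) = 1 by ring] at this

theorem decompose_zero_mem_tGradeOne {k : S} (hk : k ∈ F.kerRho) :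
    (decompose F.grade k 0 : S) ∈ F.tGradeOne := by
  induction hk using Submodule.span_induction with
  | mem k hk =>
    rcases hk with ⟨x, hx, rfl⟩ | hk
    · have hdeg : F.t * x ∈ F.grade 0 := by simpa using SetLike.mul_mem_graded F.t_mem hx
      rw [decompose_of_mem_same _ hdeg]
      exact mem_tGradeOne.mpr ⟨x, hx, rfl⟩
    · obtain ⟨n, hn, hkn⟩ := Set.mem_iUnion₂.mp hk
      rw [decompose_of_mem_ne _ hkn hn]
      exact zero_mem _
  | zero => simp
  | add k k' _ _ hk hk' => simpa using add_mem hk hk'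
  | smul a k _ hk =>
    rw [smul_eq_mul]
    induction a using Decomposition.inductionOn F.grade with
    | zero => simp
    | @homogeneous i a =>
      rw [← add_neg_cancel i, coe_decompose_mul_add_of_left_mem F.grade a.2]
      by_cases hi : i = 0
      · subst hi
        simpa using mul_mem_tGradeOne_of_mem_zero a.2 hk
      · exact mul_mem_tGradeOne hi a.2 (decompose F.grade k (-i)).2
    | add a a' ha ha' => simpa [add_mul] using add_mem ha ha'

theorem isUnit_one_sub_of_mem_tGradeOne {y : S} (hy : y ∈ F.tGradeOne) : IsUnit (1 - y) := by
  obtain ⟨x, hx, rfl⟩ := mem_tGradeOne.mp hy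
  obtain ⟨c, hc, hσ⟩ := F.σ_frob (F.t * x) (by simpa using SetLike.mul_mem_graded F.t_mem hx)
  obtain ⟨z, -, hz⟩ := F.p_jac (F.σ x - c) (sub_mem (F.σ_mem x) hc)
  have hpow : (F.t * x) ^ p = p * (F.σ x - c) := by
    rw [map_mul, F.σ_t] at hσ
    linear_combination -hσ
  refine isUnit_of_dvd_unit ?_ (IsUnit.of_mul_eq_one z hz)
  simpa [hpow] using sub_dvd_pow_sub_pow 1 (F.t * x) p

end Frame

/-- For finitely generated graded `S`-modules `M`, `N` over a frame, with `M`
projective as an `S`-module, a degree-preserving `S`-linear map `f : N → M` is bijective if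
and only if its reduction modulo `K = ker ρ` (i.e. the induced map
`N ⊗_{S,ρ} R = N/KN → M/KM = M ⊗_{S,ρ} R`) is bijective. -/
theorem frame_bijective_iff_reduction_bijective (p : ℕ)
    {S : Type} [CommRing S] (F : Frame p S)
    {M : Type} [AddCommGroup M] [Module S M]
    (ℳ : ℤ → AddSubgroup M)
    (hMsmul : ∀ {m n : ℤ} {a : S} {x : M}, a ∈ F.grade m → x ∈ ℳ n → a • x ∈ ℳ (m + n))
    (hMinternal : DirectSum.IsInternal ℳ)
    (hMfin : Module.Finite S M)
    (hMproj : Module.Projective S M)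
    {N : Type} [AddCommGroup N] [Module S N]
    (𝒩 : ℤ → AddSubgroup N)
    (hNsmul : ∀ {m n : ℤ} {a : S} {x : N}, a ∈ F.grade m → x ∈ 𝒩 n → a • x ∈ 𝒩 (m + n))
    (hNinternal : DirectSum.IsInternal 𝒩)
    (hNfin : Module.Finite S N)
    (f : N →ₗ[S] M)
    (hf : ∀ (n : ℤ), ∀ x ∈ 𝒩 n, f x ∈ ℳ n) :
    Function.Bijective f ↔
      Function.Bijective
        (Submodule.mapQ (F.kerRho • (⊤ : Submodule S N)) (F.kerRho • (⊤ : Submodule S M)) f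
          (Submodule.map_le_iff_le_comap.mp (by
            rw [Submodule.map_smul'']
            exact smul_mono_right _ le_top))) := by
  let : Decomposition ℳ := hMinternal.chooseDecomposition
  let : Decomposition 𝒩 := hNinternal.chooseDecomposition
  have : SetLike.GradedSMul F.grade ℳ := ⟨fun _ _ _ _ => hMsmul⟩
  have : SetLike.GradedSMul F.grade 𝒩 := ⟨fun _ _ _ _ => hNsmul⟩
  have hK : ∀ k ∈ F.kerRho, IsUnit (1 - (decompose F.grade k 0 : S)) := fun _ hk =>
    Frame.isUnit_one_sub_of_mem_tGradeOne (Frame.decompose_zero_mem_tGradeOne hk)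
  refine ⟨fun hbij => Submodule.bijective_mapQ_of_bijective hbij ?_ _, fun hbar => ?_⟩
  · rw [map_smul'', Submodule.map_top, LinearMap.range_eq_top.mpr hbij.surjective]
  have hsurj : Function.Surjective f := by
    refine LinearMap.range_eq_top.mp (top_le_iff.mp ?_)
    refine le_of_le_sup_smul_of_isHomogeneous F.grade hK (LinearMap.isHomogeneous_range hf)
      (fun _ _ _ => trivial) (Module.finite_def.mp hMfin) ?_
    rw [range_sup_eq_top_of_surjective_mapQ hbar.surjective]
  obtain ⟨g, hg⟩ := Module.projective_lifting_property f LinearMap.id hsurj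
  have hker : LinearMap.ker f ≤ ⊥ ⊔ F.kerRho • LinearMap.ker f := by
    rw [bot_sup_eq]
    exact le_trans (le_inf le_rfl (ker_le_of_injective_mapQ hbar.injective))
      (LinearMap.ker_inf_smul_top_le_of_comp_eq_id hg F.kerRho)
  have hker_fg : (LinearMap.ker f).FG := by
    rw [LinearMap.ker_eq_range_of_comp_eq_id hg]
    exact fg_range _
  have hker_bot := le_of_le_sup_smul_of_isHomogeneous F.grade hK
    (fun _ _ hx => by simp [(mem_bot S).mp hx]) (LinearMap.isHomogeneous_ker hf) hker_fg hker
  exact ⟨LinearMap.ker_eq_bot.mp (le_bot_iff.mp hker_bot), hsurj⟩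
end

section
/- Let (S, σ, τ) be a frame for R. Then every element a ∈ S₀ whose image in R/pR is zero (i.e., a ∈ tS₁ + pS₀) satisfies a^p ∈ pS₀. In particular, the kernel of the induced ring homomorphism S₀/pS₀ → R/pR is a nil ideal. -/
variable {p : ℕ} {S : Type} [CommRing S]

/-- For a frame `(S, σ, τ)` for `R`, every `a ∈ S₀` whose image in `R/pR` is
zero (i.e. `a ∈ tS₁ + pS₀`) satisfies `a^p ∈ pS₀`.  In particular, the kernel of the induced
ring homomorphism `S₀/pS₀ → R/pR` is a nil ideal. -/
theorem frame_kernel_modp_nil (p : ℕ) (hp : p.Prime) {S : Type} [CommRing S]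
    (F : Frame p S) :
    (∀ a ∈ F.grade 0, (∃ x ∈ F.grade 1, ∃ b ∈ F.grade 0, a = F.t * x + (p : S) * b) →
        ∃ c ∈ F.grade 0, a ^ p = (p : S) * c)
    ∧
    (∀ a ∈ F.grade 0, (∃ x ∈ F.grade 1, ∃ b ∈ F.grade 0, a = F.t * x + (p : S) * b) →
        ∃ k : ℕ, 1 ≤ k ∧ ∃ c ∈ F.grade 0, a ^ k = (p : S) * c) := by
  have main : ∀ a ∈ F.grade 0, (∃ x ∈ F.grade 1, ∃ b ∈ F.grade 0, a = F.t * x + (p : S) * b) →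
      ∃ c ∈ F.grade 0, a ^ p = (p : S) * c := by
    rintro a ha ⟨x, hx, b, hb, rfl⟩
    have htx : F.t * x ∈ F.grade 0 := by simpa using F.mul_mem F.t_mem hx
    obtain ⟨c, hc, hσ⟩ := F.σ_frob (F.t * x) htx
    have hσtx : F.σ (F.t * x) = (p : S) * F.σ x := by rw [map_mul, F.σ_t]
    have htxp : (F.t * x) ^ p = (p : S) * (F.σ x - c) := by
      rw [hσtx] at hσ; linear_combination -hσ
    have hpb : (p : S) * b ∈ F.grade 0 := by
      simpa [nsmul_eq_mul] using AddSubgroup.nsmul_mem (F.grade 0) hb p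
    -- work in the subring S₀
    set u : F.S0 := ⟨F.t * x, htx⟩ with hu
    set β : F.S0 := ⟨b, hb⟩ with hβ
    set α : F.S0 := ⟨F.t * x + (p : S) * b, add_mem htx hpb⟩ with hα
    have hαu : α - u = (p : F.S0) * β := by
      apply Subtype.ext; push_cast; ring
    have hdvd : (p : F.S0) ∣ α ^ p - u ^ p :=
      dvd_trans ⟨β, hαu⟩ (sub_dvd_pow_sub_pow α u p)
    obtain ⟨d, hd⟩ := hdvd
    set γ : F.S0 := ⟨F.σ x - c, sub_mem (F.σ_mem x) hc⟩ with hγ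
    have hup : u ^ p = (p : F.S0) * γ := by
      apply Subtype.ext; push_cast; exact htxp
    refine ⟨((γ + d : F.S0) : S), (γ + d).2, ?_⟩
    have : α ^ p = (p : F.S0) * (γ + d) := by
      have := hd; rw [sub_eq_iff_eq_add] at this; rw [this, hup]; ring
    have := congrArg (Subtype.val) this
    push_cast at this
    simpa using this
  refine ⟨main, fun a ha h => ⟨p, hp.one_lt.le, main a ha h⟩⟩
end

section
/- Let G be a group, let N₁ ⊇ N₂ ⊇ N₃ ⊇ … be a descending sequence of normal subgroups of G such that the natural map G → lim_m G/Nₘ to the inverse limit is bijective, and let 𝒰 : G → G be a group homomorphism with 𝒰(Nₘ) ⊆ Nₘ for all m. Assume 𝒰 is pointwise nilpotent modulo the filtration: for every g ∈ G and every m ≥ 1 there exists k ≥ 1 with 𝒰ᵏ(g) ∈ Nₘ. Then the map G → G defined by y ↦ 𝒰(y)⁻¹·y is bijective. -/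
/-! The inverse of `y ↦ 𝒰(y)⁻¹ y` is the "geometric series" `z ↦ ⋯ 𝒰²(z) 𝒰(z) z`: the equation
`y = 𝒰(y) z` iterates to `y = 𝒰ᵏ(y) 𝒰ᵏ⁻¹(z) ⋯ 𝒰(z) z`. Modulo each `Nₘ` the partial products
stabilise, because their factors eventually lie in `Nₘ`, so surjectivity onto the inverse limit
produces the limit `y`. Injectivity: two preimages of the same element differ by a fixed point of
`𝒰`, which lies in every `Nₘ` by nilpotence, hence is trivial. -/

/-- The natural map from `G` to the inverse limit of the quotients `G/Nₘ`. -/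
def toInverseLimit {G : Type} [Group G] (N : ℕ → Subgroup G) [∀ m, (N m).Normal]
    (hmono : ∀ m, N (m + 1) ≤ N m) :
    G → {x : ∀ m, G ⧸ N m //
      ∀ m, QuotientGroup.map (N (m + 1)) (N m) (MonoidHom.id G)
        (fun g hg => hmono m hg) (x (m + 1)) = x m} :=
  fun g => ⟨fun _ => QuotientGroup.mk g, fun _ => rfl⟩

open Filter Function

section InverseLimit

variable {G : Type} [Group G] {N : ℕ → Subgroup G} [∀ m, (N m).Normal]
  {hmono : ∀ m, N (m + 1) ≤ N m}

theorem eq_of_forall_mk_eq_of_injective_toInverseLimit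
    (hinj : Injective (toInverseLimit N hmono)) {a b : G}
    (h : ∀ m, (a : G ⧸ N m) = b) : a = b :=
  hinj (Subtype.ext (funext h))

theorem exists_eventually_mk_eq_of_surjective_toInverseLimit
    (hsurj : Surjective (toInverseLimit N hmono)) (p : ℕ → G)
    (hp : ∀ m, ∃ c : G ⧸ N m, ∀ᶠ k in atTop, (p k : G ⧸ N m) = c) :
    ∃ y : G, ∀ m, ∀ᶠ k in atTop, (p k : G ⧸ N m) = y := by
  choose c hc using hp
  have hcompat : ∀ m, QuotientGroup.map (N (m + 1)) (N m) (MonoidHom.id G)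
      (fun g hg => hmono m hg) (c (m + 1)) = c m := by
    intro m
    obtain ⟨k, hk, hk'⟩ := ((hc m).and (hc (m + 1))).exists
    rw [← hk, ← hk']
    rfl
  obtain ⟨y, hy⟩ := hsurj ⟨c, hcompat⟩
  refine ⟨y, fun m => (hc m).mono fun k hk => ?_⟩
  rw [hk]
  exact (congrFun (congrArg Subtype.val hy) m).symm

end InverseLimit

section OrbitProd

variable {G : Type*} [Group G]

/-- `orbitProd f z k = f^[k-1] z * ⋯ * f z * z`. -/
def orbitProd (f : G →* G) (z : G) : ℕ → G
  | 0 => 1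
  | k + 1 => f (orbitProd f z k) * z

theorem orbitProd_succ' (f : G →* G) (z : G) (k : ℕ) :
    orbitProd f z (k + 1) = f^[k] z * orbitProd f z k := by
  induction k with
  | zero => simp [orbitProd]
  | succ k ih =>
    change f (orbitProd f z (k + 1)) * z = f^[k + 1] z * (f (orbitProd f z k) * z)
    rw [ih, map_mul, mul_assoc, iterate_succ_apply']

theorem orbitProd_eventually_mk_eq {f : G →* G} {H : Subgroup G} [H.Normal]
    (hf : Set.MapsTo f H H) {z : G} {K : ℕ} (hK : f^[K] z ∈ H) :
    ∀ᶠ k in atTop, ((orbitProd f z k : G) : G ⧸ H) = orbitProd f z K := by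
  refine eventually_atTop.2 ⟨K, fun k hk => ?_⟩
  induction k, hk using Nat.le_induction with
  | base => rfl
  | succ k hk ih =>
    have hmem : f^[k] z ∈ H := by
      obtain ⟨d, rfl⟩ := Nat.exists_eq_add_of_le' hk
      rw [iterate_add_apply]
      exact hf.iterate d hK
    rw [orbitProd_succ', QuotientGroup.mk_mul, (QuotientGroup.eq_one_iff _).2 hmem, one_mul, ih]

end OrbitProd

theorem MonoidHom.isFixedPt_mul_inv_of_inv_mul_eq {G : Type*} [Group G] (f : G →* G) {a b : G}
    (h : (f a)⁻¹ * a = (f b)⁻¹ * b) : IsFixedPt f (a * b⁻¹) := by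
  have hab : a * b⁻¹ = f a * (f b)⁻¹ := by
    rw [mul_inv_eq_iff_eq_mul, mul_assoc, ← h, mul_inv_cancel_left]
  rw [IsFixedPt, map_mul, map_inv, hab]

/-- Let `G` be a group with a descending sequence of normal subgroups
`N₁ ⊇ N₂ ⊇ …` such that the natural map `G → lim_m G/Nₘ` is bijective, and let `𝒰 : G → G`
be a group homomorphism with `𝒰(Nₘ) ⊆ Nₘ` which is pointwise nilpotent modulo the
filtration.  Then `y ↦ 𝒰(y)⁻¹·y` is bijective. -/
theorem bijective_of_pointwise_nilpotent_mod_filtration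
    {G : Type} [Group G] (N : ℕ → Subgroup G) [∀ m, (N m).Normal]
    (hmono : ∀ m, N (m + 1) ≤ N m)
    (hlim : Function.Bijective (toInverseLimit N hmono))
    (𝒰 : G →* G)
    (hstab : ∀ m, ∀ g ∈ N m, 𝒰 g ∈ N m)
    (hnil : ∀ (g : G) (m : ℕ), ∃ k : ℕ, 1 ≤ k ∧ (⇑𝒰)^[k] g ∈ N m) :
    Function.Bijective (fun y : G => (𝒰 y)⁻¹ * y) := by
  refine ⟨fun a b hab => ?_, fun z => ?_⟩
  · have hfix := 𝒰.isFixedPt_mul_inv_of_inv_mul_eq hab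
    rw [← mul_inv_eq_one]
    refine eq_of_forall_mk_eq_of_injective_toInverseLimit hlim.1 fun m => ?_
    obtain ⟨k, -, hk⟩ := hnil (a * b⁻¹) m
    rw [QuotientGroup.mk_one, QuotientGroup.eq_one_iff, ← (hfix.iterate k).eq]
    exact hk
  · obtain ⟨y, hy⟩ := exists_eventually_mk_eq_of_surjective_toInverseLimit hlim.2
      (orbitProd 𝒰 z) fun m => ⟨_, orbitProd_eventually_mk_eq (hstab m) (hnil z m).choose_spec.2⟩
    refine ⟨y, inv_mul_eq_iff_eq_mul.2 (?_ : y = 𝒰 y * z)⟩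
    refine eq_of_forall_mk_eq_of_injective_toInverseLimit hlim.1 fun m => ?_
    obtain ⟨k, hk, hk₁⟩ := ((hy m).and ((tendsto_add_atTop_nat 1).eventually (hy m))).exists
    have hUk : (𝒰 (orbitProd 𝒰 z k) : G ⧸ N m) = 𝒰 y := by
      rw [QuotientGroup.eq] at hk ⊢
      simpa only [map_mul, map_inv] using hstab m _ hk
    rw [← hk₁, orbitProd, QuotientGroup.mk_mul, hUk, ← QuotientGroup.mk_mul]
end

section
/- Let G be a group and let 𝒰 : G → G be a group homomorphism which is pointwise nilpotent, i.e., for every g ∈ G there exists k ≥ 1 with 𝒰ᵏ(g) = 1. Then the map G → G defined by y ↦ 𝒰(y)⁻¹·y is bijective. -/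
/-- Let `G` be a group and `𝒰 : G → G` a pointwise nilpotent group
homomorphism (for every `g` some iterate `𝒰ᵏ(g)`, `k ≥ 1`, is the identity).  Then the map
`y ↦ 𝒰(y)⁻¹·y` is bijective. -/
theorem bijective_of_pointwise_nilpotent {G : Type} [Group G] (𝒰 : G →* G)
    (hnil : ∀ g : G, ∃ k : ℕ, 1 ≤ k ∧ (⇑𝒰)^[k] g = 1) :
    Function.Bijective (fun y : G => (𝒰 y)⁻¹ * y) := by
  constructor
  · intro a b hab
    simp only at hab
    have h : a * b⁻¹ = 𝒰 (a * b⁻¹) := by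
      have hm : 𝒰 (a * b⁻¹) = 𝒰 a * (𝒰 b)⁻¹ := by simp
      rw [hm]
      have : a = 𝒰 a * ((𝒰 b)⁻¹ * b) := by
        rw [← hab]; group
      calc a * b⁻¹ = 𝒰 a * ((𝒰 b)⁻¹ * b) * b⁻¹ := by rw [← this]
        _ = 𝒰 a * (𝒰 b)⁻¹ := by group
    have hiter : ∀ n, (⇑𝒰)^[n] (a * b⁻¹) = a * b⁻¹ := by
      intro n
      induction n with
      | zero => rfl
      | succ n ih => rw [Function.iterate_succ_apply', ih, ← h]
    obtain ⟨k, _, hk⟩ := hnil (a * b⁻¹)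
    have h1 : a * b⁻¹ = 1 := by rw [← hiter k, hk]
    exact mul_inv_eq_one.mp h1
  · intro g
    obtain ⟨k, _, hk⟩ := hnil g
    let f : ℕ → G := fun n => Nat.rec 1 (fun _ y => 𝒰 y * g) n
    have hstep : ∀ n, f (n + 1) = 𝒰 (f n) * g := fun n => rfl
    have hmain : ∀ n, f (n + 1) = (⇑𝒰)^[n] g * f n := by
      intro n
      induction n with
      | zero => simp [f]
      | succ n ih =>
        rw [hstep (n + 1), ih, map_mul, Function.iterate_succ_apply', mul_assoc, ← ih, hstep]
    refine ⟨f k, ?_⟩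
    have hfix : 𝒰 (f k) * g = f k := by
      rw [← hstep, hmain k, hk, one_mul]
    simp only
    exact inv_mul_eq_iff_eq_mul.mpr hfix.symm
end

section
/- Let p be an odd prime and let R be a commutative ring which is p-adically complete and separated (the natural map R → lim_m R/pᵐR is bijective). Let a ∈ R be an element whose image in R/pR is nilpotent. Then for every c ∈ R there exists a unique x ∈ R with a·x² + 2·x + c = 0. -/
/-- Let `p` be an odd prime and `R` a commutative ring which is `p`-adically
complete and separated.  If `a ∈ R` has nilpotent image in `R/pR`, then for every `c ∈ R`
there is a unique `x ∈ R` with `a·x² + 2·x + c = 0`. -/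
theorem unique_root_of_quadratic_p_adic (p : ℕ) (hp : p.Prime) (hodd : p ≠ 2)
    {R : Type} [CommRing R]
    [IsAdicComplete (Ideal.span {(p : R)}) R]
    (a : R) (ha : ∃ n : ℕ, a ^ n ∈ Ideal.span {(p : R)}) :
    ∀ c : R, ∃! x : R, a * x ^ 2 + 2 * x + c = 0 := by
  intro c
  set I : Ideal R := Ideal.span {(p : R)} with hI
  have hIJ : I ≤ Ideal.jacobson ⊥ := IsAdicComplete.le_jacobson_bot I
  obtain ⟨n₀, hn₀⟩ := ha
  -- a is in the Jacobson radical
  have haJ : a ∈ Ideal.jacobson (⊥ : Ideal R) := by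
    rw [Ideal.jacobson, Ideal.mem_sInf]
    rintro M ⟨-, hMmax⟩
    have hle : Ideal.jacobson (⊥ : Ideal R) ≤ M := sInf_le ⟨bot_le, hMmax⟩
    exact hMmax.isPrime.mem_of_pow_mem n₀ (hle (hIJ hn₀))
  have hunit : ∀ t : R, IsUnit (a * t + 1) := fun t => Ideal.mem_jacobson_bot.mp haJ t
  -- 2 is a unit
  have hpJ : (p : R) ∈ Ideal.jacobson (⊥ : Ideal R) :=
    hIJ (Ideal.subset_span (Set.mem_singleton _))
  have h2 : IsUnit (2 : R) := by
    have hup : IsUnit ((p : R) * 1 + 1) := Ideal.mem_jacobson_bot.mp hpJ 1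
    have hnat : 2 * ((p + 1) / 2) = p + 1 := by
      obtain ⟨t, ht⟩ := (hp.odd_of_ne_two hodd).add_one
      omega
    have hcast : (2 : R) * (((p + 1) / 2 : ℕ) : R) = (p : R) * 1 + 1 := by
      have h6 : ((2 * ((p + 1) / 2) : ℕ) : R) = ((p + 1 : ℕ) : R) := by rw [hnat]
      push_cast at h6
      linear_combination h6
    exact isUnit_of_mul_isUnit_left (hcast ▸ hup)
  set k : R := ↑h2.unit⁻¹ with hkdef
  have hk : (2 : R) * k = 1 := by
    rw [hkdef]
    exact h2.mul_val_inv
  -- the iteration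
  set T : R → R := fun x => -(c + a * x ^ 2) * k with hT
  set seq : ℕ → R := fun i => T^[i] 0 with hseq
  have hstep : ∀ i, seq (i + 1) = -(c + a * (seq i) ^ 2) * k := fun i =>
    Function.iterate_succ_apply' T i 0
  have hdiff : ∀ i, a ^ i ∣ seq (i + 1) - seq i := by
    intro i
    induction i with
    | zero => simp
    | succ i ih =>
      obtain ⟨d, hd⟩ := ih
      refine ⟨-k * (seq (i + 1) + seq i) * d, ?_⟩
      linear_combination hstep (i + 1) - hstep i - a * k * (seq (i + 1) + seq i) * hd
  have hdiff2 : ∀ i j, a ^ i ∣ seq (i + j) - seq i := by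
    intro i j
    induction j with
    | zero => simp
    | succ j ih =>
      have h1 : a ^ i ∣ seq (i + j + 1) - seq (i + j) :=
        dvd_trans (pow_dvd_pow a (Nat.le_add_right i j)) (hdiff (i + j))
      have := dvd_add h1 ih
      simpa [show i + (j + 1) = i + j + 1 by ring, sub_add_sub_cancel] using this
  -- value of the quadratic along the sequence
  have hg : ∀ i, a * (seq i) ^ 2 + 2 * seq i + c = 2 * (seq i - seq (i + 1)) := by
    intro i
    linear_combination 2 * hstep i - (c + a * (seq i) ^ 2) * hk
  -- set up the Cauchy sequence
  set n : ℕ := n₀ + 1 with hn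
  have hanI : (p : R) ∣ a ^ n := by
    rw [← Ideal.mem_span_singleton]
    have h7 : a ^ n₀ * a ∈ I := Ideal.mul_mem_right a I hn₀
    rwa [← pow_succ] at h7
  have hpm : ∀ m : ℕ, (p : R) ^ m ∣ a ^ (n * m) := by
    intro m
    obtain ⟨r, hr⟩ := hanI
    exact ⟨r ^ m, by rw [pow_mul, hr, mul_pow]⟩
  have hmemI : ∀ (m : ℕ) (z : R), (p : R) ^ m ∣ z → z ∈ (I ^ m • ⊤ : Submodule R R) := by
    intro m z hz
    have : z ∈ I ^ m := by
      rw [hI, Ideal.span_singleton_pow, Ideal.mem_span_singleton]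
      exact hz
    simpa [smul_eq_mul, Ideal.mul_top] using this
  have hcau : ∀ {m m' : ℕ}, m ≤ m' →
      (fun m => seq (n * m)) m ≡ (fun m => seq (n * m)) m' [SMOD (I ^ m • ⊤ : Submodule R R)] := by
    intro m m' hmm
    rw [SModEq.sub_mem]
    refine hmemI m _ ?_
    have h1 : a ^ (n * m) ∣ seq (n * m') - seq (n * m) := by
      have := hdiff2 (n * m) (n * m' - n * m)
      rwa [Nat.add_sub_cancel' (Nat.mul_le_mul_left n hmm)] at this
    have : (p : R) ^ m ∣ seq (n * m') - seq (n * m) := (hpm m).trans h1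
    simpa [neg_sub] using this.neg_right
  obtain ⟨L, hL⟩ := IsPrecomplete.prec (IsAdicComplete.toIsPrecomplete : IsPrecomplete I R) hcau
  have hroot : a * L ^ 2 + 2 * L + c = 0 := by
    refine IsHausdorff.haus (IsAdicComplete.toIsHausdorff : IsHausdorff I R) _ fun m => ?_
    rw [SModEq.zero]
    have hLm : L - seq (n * m) ∈ (I ^ m • ⊤ : Submodule R R) := by
      have := (SModEq.sub_mem).mp (hL m)
      simpa [neg_sub] using Submodule.neg_mem _ this
    have h1 : (a * L ^ 2 + 2 * L + c) - (a * (seq (n * m)) ^ 2 + 2 * seq (n * m) + c)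
        = (a * (L + seq (n * m)) + 2) * (L - seq (n * m)) := by ring
    have h2' : (a * (L + seq (n * m)) + 2) * (L - seq (n * m)) ∈ (I ^ m • ⊤ : Submodule R R) := by
      simpa [smul_eq_mul] using
        Submodule.smul_mem (I ^ m • ⊤ : Submodule R R) (a * (L + seq (n * m)) + 2) hLm
    have h3 : a * (seq (n * m)) ^ 2 + 2 * seq (n * m) + c ∈ (I ^ m • ⊤ : Submodule R R) := by
      refine hmemI m _ ?_
      rw [hg (n * m)]
      have hd : (p : R) ^ m ∣ seq (n * m) - seq (n * m + 1) := by
        have h5 := dvd_neg.mpr ((hpm m).trans (hdiff (n * m)))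
        rwa [neg_sub] at h5
      exact hd.mul_left 2
    have h4 := Submodule.add_mem _ h2' h3
    rwa [← h1, sub_add_cancel] at h4
  refine ⟨L, hroot, ?_⟩
  intro y hy
  have hfac : (y - L) * (a * (y + L) + 2) = 0 := by linear_combination hy - hroot
  have hu : IsUnit (a * (y + L) + 2) := by
    have h1 : (2 : R) * (a * ((y + L) * k) + 1) = a * (y + L) + 2 := by
      linear_combination (a * (y + L)) * hk
    exact h1 ▸ h2.mul (hunit ((y + L) * k))
  exact sub_eq_zero.mp ((hu.mul_left_eq_zero).mp hfac)
end

section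
/- Let (S, σ, τ) be a frame for R = S₀/tS₁ such that S₀ and S₁ are p-adically complete and separated as abelian groups. If p^m·R = p^{m+1}·R for some m ≥ 0 (equivalently, the projection R/p^{m+1}R → R/p^m R is bijective), then p^m·R = 0; in particular p is nilpotent in R. -/
variable {p : ℕ} {S : Type} [CommRing S]

/-- Let `(S, σ, τ)` be a frame for `R = S₀/tS₁` such that `S₀` and `S₁` are
`p`-adically complete and separated as abelian groups.  If `p^m·R = p^{m+1}·R` for some
`m ≥ 0`, then `p^m·R = 0`; in particular `p` is nilpotent in `R`. -/
theorem frame_p_adic_p_nilpotent (p : ℕ) (hp : p.Prime) {S : Type} [CommRing S]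
    (F : Frame p S)
    (h0 : IsAdicComplete (Ideal.span {(p : ℤ)}) (F.grade 0))
    (h1 : IsAdicComplete (Ideal.span {(p : ℤ)}) (F.grade 1))
    (m : ℕ)
    (hstep : ∀ a ∈ F.grade 0, ∃ b ∈ F.grade 0, ∃ x ∈ F.grade 1,
      (p : S) ^ m * a = (p : S) ^ (m + 1) * b + F.t * x) :
    (∀ a ∈ F.grade 0, ∃ x ∈ F.grade 1, (p : S) ^ m * a = F.t * x)
    ∧ (∃ k : ℕ, ∀ a ∈ F.grade 0, ∃ x ∈ F.grade 1, (p : S) ^ k * a = F.t * x) := by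

  have main : ∀ a ∈ F.grade 0, ∃ x ∈ F.grade 1, (p : S) ^ m * a = F.t * x := by
    intro a ha
    choose b hb x hx key using hstep
    let aseq : ℕ → F.grade 0 := fun n =>
      Nat.rec (motive := fun _ => F.grade 0) ⟨a, ha⟩ (fun _ prev => ⟨b prev prev.2, hb prev prev.2⟩) n
    have aseq0 : aseq 0 = (⟨a, ha⟩ : F.grade 0) := rfl
    let xi : ℕ → F.grade 1 := fun n => ⟨x (aseq n).1 (aseq n).2, hx (aseq n).1 (aseq n).2⟩
    have aseq_succ : ∀ n, ((↑(aseq (n+1)) : S)) = b (aseq n).1 (aseq n).2 := fun n => rfl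
    have xi_def : ∀ n, ((↑(xi n) : S)) = x (aseq n).1 (aseq n).2 := fun n => rfl
    have keyn : ∀ n, (p:S)^m * (↑(aseq n) : S) = (p:S)^(m+1) * (↑(aseq (n+1)) : S) + F.t * (↑(xi n) : S) := by
      intro n
      rw [aseq_succ, xi_def]
      exact key (aseq n).1 (aseq n).2
    let ysum : ℕ → F.grade 1 := fun n => ∑ i ∈ Finset.range n, ((p:ℤ)^i) • xi i
    have ysum_coe : ∀ n, ((↑(ysum n) : S)) = ∑ i ∈ Finset.range n, (p:S)^i * (↑(xi i) : S) := by
      intro n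
      simp only [ysum, AddSubgroup.val_finset_sum, AddSubgroup.coe_zsmul, zsmul_eq_mul]
      push_cast
      rfl
    have iter : ∀ n, (p:S)^m * a = (p:S)^n * ((p:S)^m * (↑(aseq n) : S)) + F.t * (↑(ysum n) : S) := by
      intro n
      induction n with
      | zero => simp [ysum_coe, aseq0]
      | succ n ih =>
        rw [ih, keyn n, ysum_coe (n+1), Finset.sum_range_succ, ← ysum_coe n]
        push_cast
        ring
    have hmem : ∀ (i k : ℕ), i ≤ k → ∀ w : F.grade 1,
        ((p:ℤ)^k • w) ∈ (Ideal.span {(p:ℤ)})^i • (⊤ : Submodule ℤ (F.grade 1)) := by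
      intro i k hik w
      rw [Ideal.span_singleton_pow]
      have h : (p:ℤ)^k • w = (p:ℤ)^i • ((p:ℤ)^(k-i) • w) := by
        rw [← smul_assoc, smul_eq_mul, ← pow_add, Nat.add_sub_cancel' hik]
      rw [h]
      exact Submodule.smul_mem_smul (Ideal.mem_span_singleton_self _) trivial
    have cauchy : ∀ {i j : ℕ}, i ≤ j →
        ysum i ≡ ysum j [SMOD ((Ideal.span {(p:ℤ)})^i • (⊤ : Submodule ℤ (F.grade 1)))] := by
      intro i j hij
      rw [SModEq.sub_mem]
      have h : ysum i - ysum j = -(∑ k ∈ Finset.Ico i j, (p:ℤ)^k • xi k) := by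
        have := Finset.sum_Ico_eq_sub (fun k => ((p:ℤ)^k) • xi k) hij
        simp only [ysum]
        rw [this]
        abel
      rw [h]
      refine neg_mem (Submodule.sum_mem _ ?_)
      intro k hk
      exact hmem i k (Finset.mem_Ico.mp hk).1 _
    obtain ⟨L, hL⟩ := h1.toIsPrecomplete.prec cauchy
    have htL : (F.t * L) ∈ F.grade 0 := by simpa using F.mul_mem F.t_mem L.2
    have hpm : ∀ c : F.grade 0, ((p:S)^m * c) ∈ F.grade 0 := by
      intro c
      have h1' : ((p:S)^m) ∈ F.S0 := pow_mem (natCast_mem F.S0 p) m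
      simpa using F.mul_mem h1' c.2
    have hpa : ((p:S)^m * a) ∈ F.grade 0 := hpm ⟨a, ha⟩
    set d : F.grade 0 := ⟨(p:S)^m * a - F.t * L, sub_mem hpa htL⟩ with hd
    have hdzero : d = 0 := by
      refine h0.toIsHausdorff.haus d (fun n => ?_)
      rw [SModEq.zero, Ideal.span_singleton_pow, Submodule.ideal_span_singleton_smul]
      have hLn := hL n
      rw [SModEq.sub_mem, Ideal.span_singleton_pow, Submodule.ideal_span_singleton_smul] at hLn
      rw [← SetLike.mem_coe, Submodule.coe_pointwise_smul] at hLn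
      obtain ⟨z, -, hz⟩ := hLn
      have htz : (F.t * (z : S)) ∈ F.grade 0 := by simpa using F.mul_mem F.t_mem z.2
      have hz' : (↑(ysum n) : S) - (L : S) = (p:S)^n * (z : S) := by
        have h2 := congrArg (fun w : F.grade 1 => (w : S)) hz
        simp only [AddSubgroup.coe_zsmul, AddSubgroup.coe_sub] at h2
        rw [← h2, zsmul_eq_mul]
        push_cast
        ring
      have hde : d = ((p:ℤ)^n) • (⟨(p:S)^m * (↑(aseq n) : S) + F.t * (z : S),
          add_mem (hpm _) htz⟩ : F.grade 0) := by
        apply Subtype.ext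
        show (p:S)^m * a - F.t * (L : S)
            = ((p:ℤ)^n) • ((p:S)^m * (↑(aseq n) : S) + F.t * (z : S))
        have hiter := iter n
        have hL' : (L : S) = (↑(ysum n) : S) - (p:S)^n * (z : S) := by linear_combination -hz'
        rw [zsmul_eq_mul]
        push_cast
        linear_combination hiter - F.t * hL'
      rw [hde]
      exact Submodule.smul_mem_pointwise_smul _ _ _ trivial
    have hfin : (p:S)^m * a - F.t * L = 0 := congrArg (fun w : F.grade 0 => (w : S)) hdzero
    exact ⟨L, L.2, by linear_combination hfin⟩
  exact ⟨main, m, main⟩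
end
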